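/- arXiv:2111.14430 — 3 statements merged into one kernel-verified Lean document; each statement's English description precedes it below -/
import Mathlib

section
/- Let y ∈ ℝ₊^{2m+1} and suppose x⋆ ∈ ℝ₊^{m+1} minimizes x ↦ I(y‖x*x) over ℝ₊^{m+1} with I(y‖x⋆*x⋆) < ∞. Then Σ_{i=0}^{2m} (x⋆*x⋆)_i = ( Σ_{j=0}^{m} x⋆_j )² = Σ_{i=0}^{2m} y_i. -/
open Finset Filter

/-- Extension of `x : Fin (m+1) → ℝ` to `ℕ`, zero outside `[0, m]`. -/
def ext (m : ℕ) (x : Fin (m + 1) → ℝ) (k : ℕ) : ℝ :=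
  if h : k < m + 1 then x ⟨k, h⟩ else 0

/-- Autoconvolution `(x*x)_i = ∑_{j=0}^{i} x_{i-j} x_j`. -/
def aconv (m : ℕ) (x : Fin (m + 1) → ℝ) : Fin (2 * m + 1) → ℝ :=
  fun i => ∑ j ∈ Finset.range (i.1 + 1), ext m x (i.1 - j) * ext m x j


lemma ext_nonneg (m : ℕ) (x : Fin (m+1) → ℝ) (hx : ∀ j, 0 ≤ x j) (k : ℕ) : 0 ≤ ext m x k := by
  unfold _root_.ext; split
  · exact hx _
  · exact le_rfl

lemma ext_eq_zero (m : ℕ) (x : Fin (m+1) → ℝ) {k : ℕ} (hk : m + 1 ≤ k) : ext m x k = 0 := by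
  unfold _root_.ext; rw [dif_neg]; omega

lemma aconv_nonneg (m : ℕ) (x : Fin (m+1) → ℝ) (hx : ∀ j, 0 ≤ x j) (i : Fin (2*m+1)) :
    0 ≤ aconv m x i :=
  Finset.sum_nonneg fun j _ => mul_nonneg (ext_nonneg m x hx _) (ext_nonneg m x hx _)

lemma ext_smul (m : ℕ) (t : ℝ) (x : Fin (m+1) → ℝ) (k : ℕ) :
    ext m (fun j => t * x j) k = t * ext m x k := by
  unfold _root_.ext; split <;> simp

lemma aconv_smul (m : ℕ) (t : ℝ) (x : Fin (m+1) → ℝ) (i : Fin (2*m+1)) :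
    aconv m (fun j => t * x j) i = t^2 * aconv m x i := by
  unfold aconv; rw [Finset.mul_sum]
  refine Finset.sum_congr rfl fun j _ => ?_
  rw [ext_smul, ext_smul]; ring

lemma sum_aconv (m : ℕ) (x : Fin (m+1) → ℝ) :
    ∑ i, aconv m x i = (∑ j, x j) ^ 2 := by
  classical
  set p : Polynomial ℝ := ∑ k ∈ range (m+1), Polynomial.C (ext m x k) * Polynomial.X ^ k with hp
  have hcoeff : ∀ n, p.coeff n = ext m x n := by
    intro n
    rw [hp, Polynomial.finset_sum_coeff]
    simp only [Polynomial.coeff_C_mul, Polynomial.coeff_X_pow, mul_ite, mul_one, mul_zero]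
    rw [Finset.sum_ite_eq (range (m+1)) n (fun k => ext m x k)]
    split
    · rfl
    · rename_i hnot
      exact (ext_eq_zero m x (by simp only [Finset.mem_range] at hnot; omega)).symm
  have hdeg : p.natDegree ≤ m := by
    rw [Polynomial.natDegree_le_iff_coeff_eq_zero]
    intro N hN; rw [hcoeff]; exact ext_eq_zero m x (by omega)
  have hdeg2 : (p*p).natDegree < 2*m+1 :=
    lt_of_le_of_lt (le_trans (Polynomial.natDegree_mul_le) (add_le_add hdeg hdeg)) (by omega)
  have haconv : ∀ i : Fin (2*m+1), aconv m x i = (p*p).coeff i.1 := by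
    intro i
    rw [Polynomial.coeff_mul, Finset.Nat.sum_antidiagonal_eq_sum_range_succ_mk]
    unfold aconv
    refine Finset.sum_congr rfl fun j _ => ?_
    rw [hcoeff, hcoeff]; ring
  have hsum : ∑ i, aconv m x i = (p*p).eval 1 := by
    rw [Polynomial.eval_eq_sum_range' hdeg2]
    simp only [one_pow, mul_one]
    rw [← Fin.sum_univ_eq_sum_range (fun n => (p*p).coeff n) (2*m+1)]
    exact Finset.sum_congr rfl fun i _ => haconv i
  have hev : p.eval 1 = ∑ j, x j := by
    rw [Polynomial.eval_eq_sum_range' (lt_of_le_of_lt hdeg (Nat.lt_succ_self m))]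
    simp only [one_pow, mul_one, hcoeff]
    rw [← Fin.sum_univ_eq_sum_range (fun n => ext m x n) (m+1)]
    refine Finset.sum_congr rfl fun j _ => ?_
    unfold _root_.ext; rw [dif_pos j.isLt]
  rw [hsum, Polynomial.eval_mul, hev, sq]

lemma termDiv' {a b : ℝ} (h : a ≠ 0 → 0 < b) :
    (if a = 0 then ENNReal.ofReal b
      else if b = 0 then ⊤
      else ENNReal.ofReal (a * Real.log (a / b) - a + b))
    = ENNReal.ofReal (a * Real.log (a / b) - a + b) := by
  by_cases h0 : a = 0
  · simp [h0]
  · rw [if_neg h0, if_neg (h h0).ne']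

lemma F_nonneg {a b : ℝ} (ha : 0 ≤ a) (hb : 0 ≤ b) (h : a ≠ 0 → 0 < b) :
    0 ≤ a * Real.log (a / b) - a + b := by
  rcases eq_or_lt_of_le ha with h0 | h0
  · simp [← h0, hb]
  · have hbp := h h0.ne'
    have hlog := Real.log_le_sub_one_of_pos (div_pos hbp h0)
    rw [Real.log_div hbp.ne' h0.ne'] at hlog
    have h2 : a * (Real.log b - Real.log a) ≤ a * (b/a - 1) :=
      mul_le_mul_of_nonneg_left hlog ha
    have h3 : a * (b/a) = b := by field_simp
    have h4 : Real.log (a/b) = Real.log a - Real.log b := Real.log_div h0.ne' hbp.ne'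
    nlinarith [h2, h3, h4]
/-- The index `ℓ + j ∈ {0,…,2m}` for `ℓ, j ∈ {0,…,m}`. -/
def idx (m : ℕ) (ℓ j : Fin (m + 1)) : Fin (2 * m + 1) :=
  ⟨ℓ.1 + j.1, by have h1 := ℓ.isLt; have h2 := j.isLt; omega⟩

/-- One term of the I-divergence, with values in `[0,∞]`, with the conventions
`0·log(0/b) = 0` and value `∞` if `a > 0 = b`. -/
noncomputable def termDiv (a b : ℝ) : ENNReal :=
  if a = 0 then ENNReal.ofReal b
  else if b = 0 then ⊤
  else ENNReal.ofReal (a * Real.log (a / b) - a + b)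

/-- `[0,∞]`-valued I-divergence between vectors. -/
noncomputable def Idiv {n : ℕ} (u v : Fin n → ℝ) : ENNReal :=
  ∑ i, termDiv (u i) (v i)

/-- Real-valued I-divergence between vectors (used when the second argument is
positive wherever the first one is). -/
noncomputable def IdivR {n : ℕ} (u v : Fin n → ℝ) : ℝ :=
  ∑ i, (u i * Real.log (u i / v i) - u i + v i)

/-- `[0,∞]`-valued I-divergence between `(2m+1) × (m+1)` matrices. -/
noncomputable def IdivM (m : ℕ) (M N : Fin (2 * m + 1) → Fin (m + 1) → ℝ) : ENNReal :=
  ∑ i, ∑ j, termDiv (M i j) (N i j)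

/-- Real-valued I-divergence between `(2m+1) × (m+1)` matrices. -/
noncomputable def IdivMR (m : ℕ) (M N : Fin (2 * m + 1) → Fin (m + 1) → ℝ) : ℝ :=
  ∑ i, ∑ j, (M i j * Real.log (M i j / N i j) - M i j + N i j)

/-- The set 𝒴: nonnegative matrices supported on `{(i,j) : j ≤ i ≤ j+m}` with row sums `y`. -/
def calY (m : ℕ) (y : Fin (2 * m + 1) → ℝ) (Y : Fin (2 * m + 1) → Fin (m + 1) → ℝ) : Prop :=
  (∀ i j, 0 ≤ Y i j) ∧
  (∀ (i : Fin (2 * m + 1)) (j : Fin (m + 1)), ¬(j.1 ≤ i.1 ∧ i.1 ≤ j.1 + m) → Y i j = 0) ∧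
  (∀ i, ∑ j, Y i j = y i)

/-- The matrix `W(x)` with `W(x)_{ij} = x_{i-j} x_j` on the support and `0` elsewhere. -/
def Wmat (m : ℕ) (x : Fin (m + 1) → ℝ) (i : Fin (2 * m + 1)) (j : Fin (m + 1)) : ℝ :=
  if h : j.1 ≤ i.1 ∧ i.1 ≤ j.1 + m then x ⟨i.1 - j.1, by omega⟩ * x j else 0

/-- The matrix `Y*(x)` with `Y*(x)_{ij} = (x_{i-j} x_j/(x*x)_i)·y_i` on the support. -/
noncomputable def Ystar (m : ℕ) (y : Fin (2 * m + 1) → ℝ) (x : Fin (m + 1) → ℝ)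
    (i : Fin (2 * m + 1)) (j : Fin (m + 1)) : ℝ :=
  if h : j.1 ≤ i.1 ∧ i.1 ≤ j.1 + m then
    x ⟨i.1 - j.1, by omega⟩ * x j / aconv m x i * y i
  else 0

/-- `Ŷ_j = ∑_{i=0}^{m} Y_{i+j,i} + ∑_{i=j}^{j+m} Y_{ij}`. -/
def Yhat (m : ℕ) (Y : Fin (2 * m + 1) → Fin (m + 1) → ℝ) (j : Fin (m + 1)) : ℝ :=
  (∑ ℓ : Fin (m + 1), Y (idx m ℓ j) ℓ) + ∑ ℓ : Fin (m + 1), Y (idx m ℓ j) j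

/-- The algorithm map `T(x)_j = x_j (1/c) ∑_ℓ x_ℓ y_{ℓ+j}/(x*x)_{ℓ+j}`,
with `c = √(∑ y_i)`. -/
noncomputable def Tmap (m : ℕ) (y : Fin (2 * m + 1) → ℝ) (x : Fin (m + 1) → ℝ)
    (j : Fin (m + 1)) : ℝ :=
  x j * (1 / Real.sqrt (∑ i, y i)) * ∑ ℓ, x ℓ * y (idx m ℓ j) / aconv m x (idx m ℓ j)

/-- The gradient `∇_j I(x) = 2 ∑_ℓ ( x_ℓ − x_ℓ y_{ℓ+j}/(x*x)_{ℓ+j} )`. -/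
noncomputable def gradI (m : ℕ) (y : Fin (2 * m + 1) → ℝ) (x : Fin (m + 1) → ℝ)
    (j : Fin (m + 1)) : ℝ :=
  2 * ∑ ℓ, (x ℓ - x ℓ * y (idx m ℓ j) / aconv m x (idx m ℓ j))


lemma termDiv_eq {a b : ℝ} (h : a ≠ 0 → 0 < b) :
    termDiv a b = ENNReal.ofReal (a * Real.log (a / b) - a + b) := by
  unfold termDiv; exact termDiv' h

lemma Idiv_eq {n : ℕ} (u v : Fin n → ℝ) (hu : ∀ i, 0 ≤ u i) (hv : ∀ i, 0 ≤ v i)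
    (h : ∀ i, u i ≠ 0 → 0 < v i) :
    Idiv u v = ENNReal.ofReal (∑ i, (u i * Real.log (u i / v i) - u i + v i)) := by
  unfold Idiv
  rw [ENNReal.ofReal_sum_of_nonneg (fun i _ => F_nonneg (hu i) (hv i) (h i))]
  exact Finset.sum_congr rfl fun i _ => termDiv_eq (h i)

/-- a minimizer with finite divergence satisfies
`∑ (x⋆*x⋆)_i = (∑ x⋆_j)² = ∑ y_i`. -/
theorem stmt3 (m : ℕ) (y : Fin (2 * m + 1) → ℝ) (hy : ∀ i, 0 ≤ y i)
    (xs : Fin (m + 1) → ℝ) (hxs : ∀ j, 0 ≤ xs j)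
    (hfin : Idiv y (aconv m xs) ≠ ⊤)
    (hmin : ∀ x : Fin (m + 1) → ℝ, (∀ j, 0 ≤ x j) →
      Idiv y (aconv m xs) ≤ Idiv y (aconv m x)) :
    ∑ i, aconv m xs i = (∑ j, xs j) ^ 2 ∧ (∑ j, xs j) ^ 2 = ∑ i, y i := by
  refine ⟨sum_aconv m xs, ?_⟩
  rw [← sum_aconv m xs]
  set w : Fin (2*m+1) → ℝ := aconv m xs with hwdef
  have hw0 : ∀ i, 0 ≤ w i := aconv_nonneg m xs hxs
  have hpos : ∀ i, y i ≠ 0 → 0 < w i := by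
    intro i hi
    by_contra h
    have hwi : w i = 0 := le_antisymm (not_lt.mp h) (hw0 i)
    apply hfin
    unfold Idiv
    rw [ENNReal.sum_eq_top]
    refine ⟨i, Finset.mem_univ i, ?_⟩
    unfold termDiv
    rw [if_neg hi, if_pos hwi]
  set Y := ∑ i, y i with hY
  set W := ∑ i, w i with hW
  have hY0 : 0 ≤ Y := Finset.sum_nonneg fun i _ => hy i
  have hW0 : 0 ≤ W := Finset.sum_nonneg fun i _ => hw0 i
  have key : ∀ s : ℝ, 0 < s → 0 ≤ -(Y * Real.log s) + (s - 1) * W := by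
    intro s hs
    set t := Real.sqrt s with ht
    have ht2 : t^2 = s := Real.sq_sqrt hs.le
    have htn : 0 ≤ t := Real.sqrt_nonneg s
    have h1 := hmin (fun j => t * xs j) (fun j => mul_nonneg htn (hxs j))
    have hac : aconv m (fun j => t * xs j) = fun i => s * w i := by
      funext i; rw [aconv_smul, ht2, hwdef]
    have hvs : ∀ i, 0 ≤ s * w i := fun i => mul_nonneg hs.le (hw0 i)
    have hps : ∀ i, y i ≠ 0 → 0 < s * w i := fun i hi => mul_pos hs (hpos i hi)
    rw [Idiv_eq y w hy hw0 hpos, hac, Idiv_eq y _ hy hvs hps,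
      ENNReal.ofReal_le_ofReal_iff
        (Finset.sum_nonneg fun i _ => F_nonneg (hy i) (hvs i) (hps i))] at h1
    have hdiff : ∑ i, (y i * Real.log (y i / (s * w i)) - y i + s * w i)
        - ∑ i, (y i * Real.log (y i / w i) - y i + w i)
        = -(Y * Real.log s) + (s - 1) * W := by
      rw [← Finset.sum_sub_distrib]
      have hterm : ∀ i ∈ Finset.univ,
          (y i * Real.log (y i / (s * w i)) - y i + s * w i)
            - (y i * Real.log (y i / w i) - y i + w i)
          = -(y i * Real.log s) + (s-1) * w i := by
        intro i _
        by_cases hi : y i = 0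
        · simp [hi]; ring
        · have hwi := hpos i hi
          rw [Real.log_div hi hwi.ne', Real.log_div hi (mul_pos hs hwi).ne',
            Real.log_mul hs.ne' hwi.ne']
          ring
      rw [Finset.sum_congr rfl hterm, Finset.sum_add_distrib, Finset.sum_neg_distrib,
        ← Finset.sum_mul, ← Finset.mul_sum, hY, hW]
    linarith [h1, hdiff]
  have hWY : W = Y := by
    rcases eq_or_lt_of_le hY0 with hY0' | hYpos
    · have h := key (1/2) (by norm_num)
      rw [← hY0'] at h ⊢
      nlinarith [h]
    · have hWpos : 0 < W := by
        rcases lt_or_eq_of_le hW0 with h | h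
        · exact h
        · exfalso
          have hall : ∀ i ∈ Finset.univ, w i = 0 :=
            (Finset.sum_eq_zero_iff_of_nonneg (fun i _ => hw0 i)).mp h.symm
          have : ∃ i, y i ≠ 0 := by
            by_contra hno
            push_neg at hno
            simp only [hY, hno] at hYpos
            simp at hYpos
          obtain ⟨i, hi⟩ := this
          exact (hpos i hi).ne' (hall i (Finset.mem_univ i))
      have hk := key (Y/W) (div_pos hYpos hWpos)
      by_contra hne
      have hu : W/Y ≠ 1 := by
        intro h
        apply hne
        field_simp at h
        linarith
      have hlt := Real.log_lt_sub_one_of_pos (div_pos hWpos hYpos) hu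
      rw [Real.log_div hWpos.ne' hYpos.ne'] at hlt
      rw [Real.log_div hYpos.ne' hWpos.ne'] at hk
      have h5 : (Y/W - 1) * W = Y - W := by field_simp
      have h6 : Y * (W/Y) = W := by field_simp
      nlinarith [mul_lt_mul_of_pos_left hlt hYpos, hk, h5, h6]
  exact hWY
end

section
/- Let y ∈ ℝ₊^{2m+1} and let x ∈ ℝ^{m+1} have strictly positive components; set W = W(x). Then I(Y*(x)‖W) = I(y‖x*x), i.e., the optimal value of the partial minimization over 𝒴 equals the original I-divergence between y and the autoconvolution x*x. -/
open Finset Filter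

lemma row_sum (m : ℕ) (x : Fin (m + 1) → ℝ) (i : Fin (2 * m + 1)) :
    ∑ j : Fin (m + 1), Wmat m x i j = aconv m x i := by
  set G : ℕ → ℝ := fun j =>
    if j ≤ i.1 ∧ i.1 ≤ j + m then ext m x (i.1 - j) * ext m x j else 0 with hG
  have hWG : ∀ j : Fin (m + 1), Wmat m x i j = G j.1 := by
    intro j
    simp only [Wmat, hG]
    by_cases h : j.1 ≤ i.1 ∧ i.1 ≤ j.1 + m
    · rw [dif_pos h, if_pos h]
      have h1 : i.1 - j.1 < m + 1 := by omega
      have h2 : j.1 < m + 1 := j.isLt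
      simp only [_root_.ext]
      rw [dif_pos h1, dif_pos h2]
    · rw [dif_neg h, if_neg h]
  have hil : i.1 < 2 * m + 1 := i.isLt
  have step1 : ∑ j : Fin (m + 1), Wmat m x i j = ∑ j ∈ Finset.range (m + 1), G j := by
    rw [show (∑ j : Fin (m + 1), Wmat m x i j) = ∑ j : Fin (m + 1), G j.1 from
      Finset.sum_congr rfl fun j _ => hWG j]
    exact Fin.sum_univ_eq_sum_range _ _
  have step2 : ∑ j ∈ Finset.range (m + 1), G j = ∑ j ∈ Finset.range (2 * m + 1), G j := by
    apply Finset.sum_subset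
    · intro a ha
      simp only [Finset.mem_range] at *; omega
    · intro a _ ha
      simp only [Finset.mem_range, not_lt] at ha
      simp only [hG]
      by_cases h : a ≤ i.1 ∧ i.1 ≤ a + m
      · rw [if_pos h]
        have hn : ¬ (a < m + 1) := by omega
        simp only [_root_.ext]
        rw [dif_neg hn, mul_zero]
      · rw [if_neg h]
  have step3 : aconv m x i = ∑ j ∈ Finset.range (2 * m + 1), G j := by
    rw [aconv]
    have hcong : ∑ j ∈ Finset.range (i.1 + 1), ext m x (i.1 - j) * ext m x j
        = ∑ j ∈ Finset.range (i.1 + 1), G j := by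
      apply Finset.sum_congr rfl
      intro j hj
      simp only [Finset.mem_range] at hj
      simp only [hG]
      by_cases h : j ≤ i.1 ∧ i.1 ≤ j + m
      · rw [if_pos h]
      · rw [if_neg h]
        have hn : ¬ (i.1 - j < m + 1) := by omega
        simp only [_root_.ext]
        rw [dif_neg hn, zero_mul]
    rw [hcong]
    apply Finset.sum_subset
    · intro a ha
      simp only [Finset.mem_range] at *; omega
    · intro a _ ha
      simp only [Finset.mem_range, not_lt] at ha
      simp only [hG]
      rw [if_neg (by omega)]
  rw [step1, step2, step3]

lemma Wmat_nonneg (m : ℕ) (x : Fin (m + 1) → ℝ) (hx : ∀ j, 0 < x j)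
    (i : Fin (2 * m + 1)) (j : Fin (m + 1)) : 0 ≤ Wmat m x i j := by
  rw [Wmat]
  by_cases h : j.1 ≤ i.1 ∧ i.1 ≤ j.1 + m
  · rw [dif_pos h]; exact (mul_pos (hx _) (hx _)).le
  · rw [dif_neg h]

lemma aconv_pos (m : ℕ) (x : Fin (m + 1) → ℝ) (hx : ∀ j, 0 < x j)
    (i : Fin (2 * m + 1)) : 0 < aconv m x i := by
  rw [← row_sum]
  have hil : i.1 < 2 * m + 1 := i.isLt
  have hlt : i.1 - m < m + 1 := by omega
  apply Finset.sum_pos' (fun j _ => Wmat_nonneg m x hx i j)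
  refine ⟨⟨i.1 - m, hlt⟩, Finset.mem_univ _, ?_⟩
  rw [Wmat, dif_pos (by simp; omega)]
  exact mul_pos (hx _) (hx _)

lemma tlog (t : ℝ) (ht : 0 < t) : 0 ≤ t * Real.log t - t + 1 := by
  have h := Real.log_le_sub_one_of_pos (show (0:ℝ) < t⁻¹ by positivity)
  rw [Real.log_inv] at h
  have h2 : t * (-Real.log t) ≤ t * (t⁻¹ - 1) := by
    apply mul_le_mul_of_nonneg_left h ht.le
  rw [mul_sub, mul_inv_cancel₀ ht.ne'] at h2
  nlinarith

/-- the optimal value of the partial minimization over 𝒴 equals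
the original divergence, `I(Y*(x)‖W(x)) = I(y‖x*x)`. -/
theorem stmt5 (m : ℕ) (y : Fin (2 * m + 1) → ℝ) (hy : ∀ i, 0 ≤ y i)
    (x : Fin (m + 1) → ℝ) (hx : ∀ j, 0 < x j) :
    IdivM m (Ystar m y x) (Wmat m x) = Idiv y (aconv m x) := by
  rw [IdivM, Idiv]
  apply Finset.sum_congr rfl
  intro i _
  set A := aconv m x i with hA
  have hApos : 0 < A := aconv_pos m x hx i
  rcases eq_or_lt_of_le (hy i) with hy0 | hy0
  · -- y i = 0
    have hY0 : ∀ j, Ystar m y x i j = 0 := by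
      intro j
      rw [Ystar]
      by_cases h : j.1 ≤ i.1 ∧ i.1 ≤ j.1 + m
      · rw [dif_pos h, ← hy0, mul_zero]
      · rw [dif_neg h]
    calc ∑ j, termDiv (Ystar m y x i j) (Wmat m x i j)
        = ∑ j, ENNReal.ofReal (Wmat m x i j) := by
          apply Finset.sum_congr rfl
          intro j _
          rw [hY0 j, termDiv, if_pos rfl]
      _ = ENNReal.ofReal (∑ j, Wmat m x i j) :=
          (ENNReal.ofReal_sum_of_nonneg (fun j _ => Wmat_nonneg m x hx i j)).symm
      _ = termDiv (y i) A := by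
          rw [row_sum, termDiv, if_pos hy0.symm, hA]
  · -- y i > 0
    set g : ℝ := y i / A * Real.log (y i / A) - y i / A + 1 with hg
    have hgnn : 0 ≤ g := tlog _ (by positivity)
    have key : ∀ j : Fin (m + 1),
        termDiv (Ystar m y x i j) (Wmat m x i j) = ENNReal.ofReal (Wmat m x i j * g) := by
      intro j
      rw [Ystar, Wmat]
      by_cases h : j.1 ≤ i.1 ∧ i.1 ≤ j.1 + m
      · rw [dif_pos h, dif_pos h]
        set w : ℝ := x ⟨i.1 - j.1, by omega⟩ * x j with hw
        have hwpos : 0 < w := mul_pos (hx _) (hx _)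
        have hapos : 0 < w / A * y i := mul_pos (div_pos hwpos hApos) hy0
        rw [termDiv, if_neg hapos.ne', if_neg hwpos.ne']
        congr 1
        have hdiv : w / A * y i / w = y i / A := by
          field_simp
        rw [← hA, hdiv, hg]
        field_simp
      · rw [dif_neg h, dif_neg h, termDiv, if_pos rfl, zero_mul]
    calc ∑ j, termDiv (Ystar m y x i j) (Wmat m x i j)
        = ∑ j, ENNReal.ofReal (Wmat m x i j * g) :=
          Finset.sum_congr rfl fun j _ => key j
      _ = ENNReal.ofReal (∑ j, Wmat m x i j * g) :=
          (ENNReal.ofReal_sum_of_nonneg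
            (fun j _ => mul_nonneg (Wmat_nonneg m x hx i j) hgnn)).symm
      _ = ENNReal.ofReal (A * g) := by rw [← Finset.sum_mul, row_sum, hA]
      _ = termDiv (y i) A := by
          rw [termDiv, if_neg hy0.ne', if_neg hApos.ne']
          congr 1
          rw [hg]
          field_simp
end

section
/- Let c > 0 and let x, x' ∈ ℝ^{m+1} both be strictly positive with Σ_{j=0}^{m} x_j = Σ_{j=0}^{m} x'_j = c. Then Σ_{j=0}^{m} |x'_j − x_j| ≤ √(2c · I(x'‖x)) = √(I(W(x')‖W(x))). -/
open Finset Filter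

/-!
For `a, b > 0` one has `3 (a - b)² ≤ (2a + 4b) (a log (a/b) - a + b)`: with `t = a/b` this says
that `g t = (2t + 4)(t log t - t + 1) - 3(t - 1)²` is nonnegative, and `g` is minimal at `1`
because `g' t = 4((t + 1) log t - 2(t - 1))` is increasing and vanishes there.
Cauchy–Schwarz with the weights `(2a + 4b)/3`, which add up to `2c`, gives the bound.

On its support, `W(x)` has the entries `x_ℓ x_j`, so `I(W(x')‖W(x))` is the I-divergence of the
product vectors `x' ⊗ x'` and `x ⊗ x`, which equals `2 (∑ x') I(x'‖x) + (∑ x' - ∑ x)²`.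
-/

open Set Real

theorem isMinOn_of_hasDerivAt_of_monotoneOn {f f' : ℝ → ℝ} {s : Set ℝ} (hs : s.OrdConnected)
    (hf : ∀ t ∈ s, HasDerivAt f (f' t) t) (hf' : MonotoneOn f' s) {p : ℝ} (hp : p ∈ s)
    (hp' : f' p = 0) : IsMinOn f s p := by
  have mvt : ∀ {a b}, a ∈ s → b ∈ s → a < b →
      ∃ ξ ∈ s, f b - f a = f' ξ * (b - a) ∧ a < ξ ∧ ξ < b := by
    intro a b ha hb hab
    obtain ⟨ξ, hξ, hslope⟩ := exists_hasDerivAt_eq_slope f f' hab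
      (fun u hu => (hf u (hs.out ha hb hu)).continuousAt.continuousWithinAt)
      (fun u hu => hf u (hs.out ha hb (Ioo_subset_Icc_self hu)))
    refine ⟨ξ, hs.out ha hb (Ioo_subset_Icc_self hξ), ?_, hξ⟩
    rw [hslope, div_mul_cancel₀ _ (sub_ne_zero.2 hab.ne')]
  refine isMinOn_iff.2 fun t ht => ?_
  rcases lt_trichotomy p t with hpt | rfl | htp
  · obtain ⟨ξ, hξs, hdiff, hpξ, -⟩ := mvt hp ht hpt
    have : 0 ≤ f' ξ := hp' ▸ hf' hp hξs hpξ.le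
    nlinarith
  · exact le_rfl
  · obtain ⟨ξ, hξs, hdiff, -, hξp⟩ := mvt ht hp htp
    have : f' ξ ≤ 0 := hp' ▸ hf' hξs hp hξp.le
    nlinarith

theorem monotoneOn_add_one_mul_log_sub :
    MonotoneOn (fun t => (t + 1) * log t - 2 * (t - 1)) (Ioi 0) := by
  have hderiv : ∀ t ∈ Ioi (0 : ℝ), HasDerivAt (fun t => (t + 1) * log t - 2 * (t - 1))
      (log t + t⁻¹ - 1) t := by
    intro t (ht : 0 < t)
    refine ((((hasDerivAt_id t).add_const 1).fun_mul (hasDerivAt_log ht.ne')).fun_sub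
      (((hasDerivAt_id t).sub_const 1).const_mul 2)).congr_deriv ?_
    simp only [id]
    field_simp
    ring
  refine monotoneOn_of_hasDerivWithinAt_nonneg (convex_Ioi 0)
    (fun t ht => (hderiv t ht).continuousAt.continuousWithinAt)
    (fun t ht => (hderiv t (interior_subset ht)).hasDerivWithinAt) fun t ht => ?_
  have := one_sub_inv_le_log_of_pos (interior_subset ht : (0 : ℝ) < t)
  linarith

theorem three_mul_sub_one_sq_le (t : ℝ) (ht : 0 < t) :
    3 * (t - 1) ^ 2 ≤ (2 * t + 4) * (t * log t - t + 1) := by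
  have hderiv : ∀ u ∈ Ioi (0 : ℝ),
      HasDerivAt (fun t => (2 * t + 4) * (t * log t - t + 1) - 3 * (t - 1) ^ 2)
        (4 * ((u + 1) * log u - 2 * (u - 1))) u := by
    intro u (hu : 0 < u)
    refine ((((hasDerivAt_id u).const_mul 2).add_const 4).fun_mul
      (((hasDerivAt_mul_log hu.ne').fun_sub (hasDerivAt_id u)).add_const 1)).fun_sub
      ((((hasDerivAt_id u).sub_const 1).fun_pow 2).const_mul 3) |>.congr_deriv ?_
    simp only [id]
    ring
  have hmono : MonotoneOn (fun t => 4 * ((t + 1) * log t - 2 * (t - 1))) (Ioi 0) :=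
    fun _ hu _ hv huv =>
      mul_le_mul_of_nonneg_left (monotoneOn_add_one_mul_log_sub hu hv huv) (by norm_num)
  have hmin := isMinOn_of_hasDerivAt_of_monotoneOn ordConnected_Ioi hderiv hmono
    (mem_Ioi.2 one_pos) (by simp)
  have := isMinOn_iff.1 hmin t ht
  simp only [log_one] at this
  linarith

theorem three_mul_sub_sq_le (a b : ℝ) (ha : 0 < a) (hb : 0 < b) :
    3 * (a - b) ^ 2 ≤ (2 * a + 4 * b) * (a * log (a / b) - a + b) := by
  have hb' := hb.ne'
  calc 3 * (a - b) ^ 2 = b ^ 2 * (3 * (a / b - 1) ^ 2) := by field_simp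
    _ ≤ b ^ 2 * ((2 * (a / b) + 4) * (a / b * log (a / b) - a / b + 1)) :=
      mul_le_mul_of_nonneg_left (three_mul_sub_one_sq_le _ (div_pos ha hb)) (sq_nonneg b)
    _ = (2 * a + 4 * b) * (a * log (a / b) - a + b) := by field_simp

theorem sum_abs_sub_le_sqrt_mul_IdivR {n : ℕ} (a b : Fin n → ℝ) (ha : ∀ i, 0 < a i)
    (hb : ∀ i, 0 < b i) :
    ∑ i, |a i - b i| ≤ √((2 * ∑ i, a i + 4 * ∑ i, b i) / 3 * IdivR a b) := by
  set w : Fin n → ℝ := fun i => (2 * a i + 4 * b i) / 3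
  set d : Fin n → ℝ := fun i => a i * log (a i / b i) - a i + b i
  have hw : ∀ i, 0 ≤ w i := fun i => by have := ha i; have := hb i; positivity
  have hwd : ∀ i, (a i - b i) ^ 2 ≤ w i * d i := fun i => by
    have := three_mul_sub_sq_le (a i) (b i) (ha i) (hb i)
    simp only [w, d]
    linarith
  have hd : ∀ i, 0 ≤ d i := fun i =>
    nonneg_of_mul_nonneg_right ((sq_nonneg _).trans (hwd i))
      (by have := ha i; have := hb i; positivity)
  calc ∑ i, |a i - b i| ≤ ∑ i, √(w i) * √(d i) := Finset.sum_le_sum fun i _ => by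
        rw [← sqrt_mul (hw i)]
        exact abs_le_sqrt (hwd i)
    _ ≤ √(∑ i, w i) * √(∑ i, d i) := sum_sqrt_mul_sqrt_le _ hw hd
    _ = √((2 * ∑ i, a i + 4 * ∑ i, b i) / 3 * IdivR a b) := by
      rw [← sqrt_mul (Finset.sum_nonneg fun i _ => hw i)]
      simp only [w, d, IdivR, ← Finset.sum_div, Finset.sum_add_distrib, ← Finset.mul_sum]

theorem sum_sum_mul_log_mul_div_mul {n : ℕ} (a b : Fin n → ℝ) (ha : ∀ i, a i ≠ 0)
    (hb : ∀ i, b i ≠ 0) :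
    ∑ j, ∑ i, (a i * a j * log (a i * a j / (b i * b j)) - a i * a j + b i * b j) =
      2 * (∑ i, a i) * IdivR a b + (∑ i, a i - ∑ i, b i) ^ 2 := by
  have hterm : ∀ i j, a i * a j * log (a i * a j / (b i * b j)) - a i * a j + b i * b j =
      a i * log (a i / b i) * a j + a i * (a j * log (a j / b j)) - a i * a j + b i * b j :=
    fun i j => by
      rw [mul_div_mul_comm, log_mul (div_ne_zero (ha i) (hb i)) (div_ne_zero (ha j) (hb j))]
      ring
  simp only [hterm, IdivR, Finset.sum_add_distrib, Finset.sum_sub_distrib,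
    ← Finset.mul_sum, ← Finset.sum_mul]
  ring

theorem sum_eq_sum_idx_of_eq_zero (m : ℕ) (j : Fin (m + 1)) (G : Fin (2 * m + 1) → ℝ)
    (hG : ∀ i : Fin (2 * m + 1), ¬(j.1 ≤ i.1 ∧ i.1 ≤ j.1 + m) → G i = 0) :
    ∑ i, G i = ∑ ℓ, G (idx m ℓ j) := by
  refine (Fintype.sum_of_injective (fun ℓ => idx m ℓ j) (fun ℓ ℓ' h => ?_) _ _
    (fun i hi => hG i fun hij => hi ⟨⟨i.1 - j.1, by omega⟩, ?_⟩) fun _ => rfl).symm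
  · have := congrArg Fin.val h
    simp only [idx] at this
    exact Fin.ext (by omega)
  · ext
    simp only [idx]
    omega

theorem Wmat_idx (m : ℕ) (x : Fin (m + 1) → ℝ) (ℓ j : Fin (m + 1)) :
    Wmat m x (idx m ℓ j) j = x ℓ * x j := by
  rw [Wmat, dif_pos (by simp only [idx]; omega)]
  congr 2
  ext
  simp [idx]

theorem IdivMR_Wmat (m : ℕ) (x x' : Fin (m + 1) → ℝ) :
    IdivMR m (Wmat m x') (Wmat m x) = ∑ j, ∑ ℓ,
      (x' ℓ * x' j * log (x' ℓ * x' j / (x ℓ * x j)) - x' ℓ * x' j + x ℓ * x j) := by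
  rw [IdivMR, Finset.sum_comm]
  refine Finset.sum_congr rfl fun j _ => ?_
  rw [sum_eq_sum_idx_of_eq_zero m j _ fun i hij => by simp [Wmat, dif_neg hij]]
  simp only [Wmat_idx]

theorem stmt14_general (m : ℕ) (c : ℝ)
    (x x' : Fin (m + 1) → ℝ) (hx : ∀ j, 0 < x j) (hx' : ∀ j, 0 < x' j)
    (hsx : ∑ j, x j = c) (hsx' : ∑ j, x' j = c) :
    (∑ j, |x' j - x j|) ≤ Real.sqrt (2 * c * IdivR x' x) ∧
    Real.sqrt (2 * c * IdivR x' x) =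
      Real.sqrt (IdivMR m (Wmat m x') (Wmat m x)) := by
  have hW : IdivMR m (Wmat m x') (Wmat m x) = 2 * c * IdivR x' x := by
    rw [IdivMR_Wmat, sum_sum_mul_log_mul_div_mul x' x (fun j => (hx' j).ne') fun j => (hx j).ne',
      hsx, hsx']
    ring
  refine ⟨?_, by rw [hW]⟩
  have hpinsker := sum_abs_sub_le_sqrt_mul_IdivR x' x hx' hx
  rwa [hsx, hsx', show (2 * c + 4 * c) / 3 = 2 * c by ring] at hpinsker

/-- Pinsker-type bound
`∑ |x'_j − x_j| ≤ √(2c·I(x'‖x)) = √(I(W(x')‖W(x)))`. -/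
theorem stmt14 (m : ℕ) (c : ℝ) (hc : 0 < c)
    (x x' : Fin (m + 1) → ℝ) (hx : ∀ j, 0 < x j) (hx' : ∀ j, 0 < x' j)
    (hsx : ∑ j, x j = c) (hsx' : ∑ j, x' j = c) :
    (∑ j, |x' j - x j|) ≤ Real.sqrt (2 * c * IdivR x' x) ∧
    Real.sqrt (2 * c * IdivR x' x) =
      Real.sqrt (IdivMR m (Wmat m x') (Wmat m x)) :=
  stmt14_general m c x x' hx hx' hsx hsx'
end
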